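/- arXiv:cs/0405094 — 14 statements merged into one kernel-verified Lean document; each statement's English description precedes it below -/
import Mathlib

section
/- The collection F is a matroid collection: (M1) the empty finset belongs to F; (M2) if X ∈ F and Y ⊆ X then Y ∈ F; (M3) for all X, Y ∈ F with X.card > Y.card there exists x ∈ X \ Y with insert x Y ∈ F. -/
lemma inj_on_fst_of_mem {n : ℕ} (X : Finset (Fin n × Bool))
    (hX : ∀ i : Fin n, ¬((i, true) ∈ X ∧ (i, false) ∈ X)) :
    Set.InjOn Prod.fst (X : Set (Fin n × Bool)) := by
  rintro ⟨i, b⟩ hx ⟨j, c⟩ hy (h : i = j)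
  subst h
  rcases b with _ | _ <;> rcases c with _ | _
  · rfl
  · exact absurd ⟨hy, hx⟩ (hX i)
  · exact absurd ⟨hx, hy⟩ (hX i)
  · rfl

/-- The collection `F` (subsets of `Fin n × Bool` never containing both
`(i, true)` and `(i, false)`) is a matroid collection: (M1), (M2), (M3). -/
theorem matroid_collection_F (n : ℕ) (hn : 1 ≤ n)
    (F : Set (Finset (Fin n × Bool)))
    (hF : F = {X : Finset (Fin n × Bool) |
      ∀ i : Fin n, ¬((i, true) ∈ X ∧ (i, false) ∈ X)}) :
    (∅ : Finset (Fin n × Bool)) ∈ F ∧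
    (∀ X ∈ F, ∀ Y : Finset (Fin n × Bool), Y ⊆ X → Y ∈ F) ∧
    (∀ X ∈ F, ∀ Y ∈ F, Y.card < X.card →
      ∃ x ∈ X \ Y, insert x Y ∈ F) := by
  subst hF
  refine ⟨by simp, ?_, ?_⟩
  · intro X hX Y hYX i ⟨h1, h2⟩
    exact hX i ⟨hYX h1, hYX h2⟩
  · intro X hX Y hY hcard
    have hXc : (X.image Prod.fst).card = X.card :=
      Finset.card_image_of_injOn (inj_on_fst_of_mem X hX)
    have hYc : (Y.image Prod.fst).card = Y.card :=
      Finset.card_image_of_injOn (inj_on_fst_of_mem Y hY)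
    have : (Y.image Prod.fst).card < (X.image Prod.fst).card := by omega
    have hsub : ¬ X.image Prod.fst ⊆ Y.image Prod.fst := fun h =>
      absurd (Finset.card_le_card h) (by omega)
    obtain ⟨i, hiX, hiY⟩ := Finset.not_subset.mp hsub
    obtain ⟨⟨i', b⟩, hxX, rfl⟩ := Finset.mem_image.mp hiX
    refine ⟨(i', b), Finset.mem_sdiff.mpr ⟨hxX, ?_⟩, ?_⟩
    · intro hxY
      exact hiY (Finset.mem_image_of_mem _ hxY)
    · intro j hj
      obtain ⟨h1, h2⟩ := hj
      simp only [Finset.mem_insert, Prod.mk.injEq] at h1 h2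
      rcases h1 with ⟨rfl, rfl⟩ | h1
      · rcases h2 with ⟨_, h⟩ | h2
        · simp at h
        · exact hiY (Finset.mem_image.mpr ⟨_, h2, rfl⟩)
      · rcases h2 with ⟨rfl, rfl⟩ | h2
        · exact hiY (Finset.mem_image.mpr ⟨_, h1, rfl⟩)
        · exact hY j ⟨h1, h2⟩
end

section
/- The collection G := A ∪ B is a greedoid collection: (M1) the empty finset belongs to G, and (M3) for all X, Y ∈ G with X.card > Y.card there exists x ∈ X \ Y with insert x Y ∈ G. -/
/-- The collection `G := A ∪ B` from the Section-2 construction is a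
greedoid collection: (M1) `∅ ∈ G`, and (M3). -/
theorem greedoid_collection_G (n : ℕ) (hn : 1 ≤ n)
    (φ : (Fin n → Bool) → Prop)
    (ℓ : Fin n) (hℓ : (ℓ : ℕ) = n - 1)
    (A B G : Set (Finset (Fin n × Bool)))
    (hA : A = {X : Finset (Fin n × Bool) |
      X.card ≤ n ∧ (ℓ, true) ∉ X ∧ (ℓ, false) ∉ X})
    (hB : B = {X : Finset (Fin n × Bool) |
      X.card = n ∧
      (∀ i : Fin n, ((i, true) ∈ X ∨ (i, false) ∈ X) ∧
        ¬((i, true) ∈ X ∧ (i, false) ∈ X)) ∧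
      φ (fun i => decide ((i, true) ∈ X))})
    (hG : G = A ∪ B) :
    (∅ : Finset (Fin n × Bool)) ∈ G ∧
    (∀ X ∈ G, ∀ Y ∈ G, Y.card < X.card →
      ∃ x ∈ X \ Y, insert x Y ∈ G) := by
  subst hA hB hG
  constructor
  · exact Or.inl ⟨by simp, by simp, by simp⟩
  · intro X hX Y hY hcard
    have hXn : X.card ≤ n := by
      rcases hX with h | h
      · exact h.1
      · exact le_of_eq h.1
    have hYA : Y.card ≤ n ∧ (ℓ, true) ∉ Y ∧ (ℓ, false) ∉ Y := by
      rcases hY with h | h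
      · exact h
      · exfalso; have := h.1; omega
    have hYlt : Y.card < n := lt_of_lt_of_le hcard hXn
    by_cases hex : ∃ x ∈ X, x ∉ Y ∧ x ≠ (ℓ, true) ∧ x ≠ (ℓ, false)
    · obtain ⟨x, hxX, hxY, hx1, hx2⟩ := hex
      refine ⟨x, Finset.mem_sdiff.mpr ⟨hxX, hxY⟩, Or.inl ⟨?_, ?_, ?_⟩⟩
      · calc (insert x Y).card ≤ Y.card + 1 := Finset.card_insert_le _ _
          _ ≤ n := by omega
      · intro h
        rcases Finset.mem_insert.mp h with h | h
        · exact hx1 h.symm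
        · exact hYA.2.1 h
      · intro h
        rcases Finset.mem_insert.mp h with h | h
        · exact hx2 h.symm
        · exact hYA.2.2 h
    · push_neg at hex
      have hnotsub : ¬ X ⊆ Y := fun h => absurd (Finset.card_le_card h) (by omega)
      obtain ⟨x, hxX, hxY⟩ := Finset.not_subset.mp hnotsub
      have hxℓ : x = (ℓ, true) ∨ x = (ℓ, false) :=
        or_iff_not_imp_left.mpr (fun h => hex x hxX hxY h)
      have hXB : X.card = n ∧
          (∀ i : Fin n, ((i, true) ∈ X ∨ (i, false) ∈ X) ∧
            ¬((i, true) ∈ X ∧ (i, false) ∈ X)) ∧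
          φ (fun i => decide ((i, true) ∈ X)) := by
        rcases hX with h | h
        · exfalso
          rcases hxℓ with rfl | rfl
          · exact h.2.1 hxX
          · exact h.2.2 hxX
        · exact h
      have hsub : X.erase x ⊆ Y := by
        intro a ha
        rw [Finset.mem_erase] at ha
        by_contra haY
        have haℓ : a = (ℓ, true) ∨ a = (ℓ, false) :=
          or_iff_not_imp_left.mpr (hex a ha.2 haY)
        rcases hxℓ with rfl | rfl <;> rcases haℓ with rfl | rfl
        · exact ha.1 rfl
        · exact (hXB.2.1 ℓ).2 ⟨hxX, ha.2⟩
        · exact (hXB.2.1 ℓ).2 ⟨ha.2, hxX⟩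
        · exact ha.1 rfl
      have hcardE : (X.erase x).card = X.card - 1 := Finset.card_erase_of_mem hxX
      have hYeq : Y = X.erase x :=
        (Finset.eq_of_subset_of_card_le hsub (by omega)).symm
      refine ⟨x, Finset.mem_sdiff.mpr ⟨hxX, hxY⟩, Or.inr ?_⟩
      have hins : insert x Y = X := by rw [hYeq, Finset.insert_erase hxX]
      rw [Set.mem_setOf_eq, hins]
      exact hXB
end

section
/- φ has a satisfying assignment (∃ Z, φ Z) if and only if there exists a finset X with X ∈ F, X ∈ G and X.card = n; moreover every X ∈ G satisfies X.card ≤ n, so such an X (when it exists) is a maximum-cardinality element of the intersection F ∩ G. (This is the paper's Lemma 1: the 3CNF formula is satisfiable iff the maximum element of the matroid-greedoid intersection has size n.) -/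
/-- Lemma 1: `φ` has a satisfying assignment iff the matroid-greedoid
intersection `F ∩ G` contains a set of size `n`; moreover every `X ∈ G` has
`X.card ≤ n`, so such a set is a maximum element of the intersection. -/
theorem sat_iff_max_intersection (n : ℕ) (hn : 1 ≤ n)
    (φ : (Fin n → Bool) → Prop)
    (ℓ : Fin n) (hℓ : (ℓ : ℕ) = n - 1)
    (F A B G : Set (Finset (Fin n × Bool)))
    (hF : F = {X : Finset (Fin n × Bool) |
      ∀ i : Fin n, ¬((i, true) ∈ X ∧ (i, false) ∈ X)})
    (hA : A = {X : Finset (Fin n × Bool) |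
      X.card ≤ n ∧ (ℓ, true) ∉ X ∧ (ℓ, false) ∉ X})
    (hB : B = {X : Finset (Fin n × Bool) |
      X.card = n ∧
      (∀ i : Fin n, ((i, true) ∈ X ∨ (i, false) ∈ X) ∧
        ¬((i, true) ∈ X ∧ (i, false) ∈ X)) ∧
      φ (fun i => decide ((i, true) ∈ X))})
    (hG : G = A ∪ B) :
    ((∃ Z : Fin n → Bool, φ Z) ↔
      ∃ X : Finset (Fin n × Bool), X ∈ F ∧ X ∈ G ∧ X.card = n) ∧
    (∀ X ∈ G, X.card ≤ n) := by
  subst hF hA hB hG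
  constructor
  · constructor
    · rintro ⟨Z, hZ⟩
      set X := Finset.univ.image (fun i : Fin n => (i, Z i)) with hX
      have hmem : ∀ i b, (i, b) ∈ X ↔ Z i = b := by
        intro i b
        simp only [hX, Finset.mem_image, Finset.mem_univ, true_and, Prod.mk.injEq]
        constructor
        · rintro ⟨a, rfl, h⟩; exact h
        · intro h; exact ⟨i, rfl, h⟩
      have hcard : X.card = n := by
        rw [hX, Finset.card_image_of_injective _ (fun a b h => (Prod.ext_iff.mp h).1)]
        simp
      refine ⟨X, ?_, ?_, hcard⟩
      · intro i ⟨h1, h2⟩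
        rw [hmem] at h1 h2; rw [h1] at h2; exact Bool.noConfusion h2
      · right
        refine ⟨hcard, fun i => ⟨?_, ?_⟩, ?_⟩
        · cases h : Z i
          · right; rw [hmem]; exact h
          · left; rw [hmem]; exact h
        · intro ⟨h1, h2⟩
          rw [hmem] at h1 h2; rw [h1] at h2; exact Bool.noConfusion h2
        · have he : (fun i => decide ((i, true) ∈ X)) = Z := by
            funext i
            cases h : Z i <;> simp [hmem, h]
          rw [he]; exact hZ
    · rintro ⟨X, hXF, hXG, hcard⟩
      rcases hXG with hXA | hXB
      · exfalso
        obtain ⟨-, ht, hf⟩ := hXA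
        have hinj : Set.InjOn Prod.fst (X : Set (Fin n × Bool)) := by
          rintro ⟨i, b⟩ hi ⟨j, c⟩ hj (h : i = j)
          subst h
          rcases b <;> rcases c
          · rfl
          · exact absurd ⟨hj, hi⟩ (hXF i)
          · exact absurd ⟨hi, hj⟩ (hXF i)
          · rfl
        have hsub : X.image Prod.fst ⊆ Finset.univ.erase ℓ := by
          intro i hi
          simp only [Finset.mem_image] at hi
          obtain ⟨⟨j, b⟩, hj, rfl⟩ := hi
          refine Finset.mem_erase.mpr ⟨?_, Finset.mem_univ _⟩
          rintro rfl
          cases b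
          · exact hf hj
          · exact ht hj
        have h1 : X.card = (X.image Prod.fst).card :=
          (Finset.card_image_of_injOn hinj).symm
        have h2 : (X.image Prod.fst).card ≤ n - 1 := by
          calc (X.image Prod.fst).card ≤ (Finset.univ.erase ℓ).card :=
                Finset.card_le_card hsub
            _ = n - 1 := by simp
        omega
      · exact ⟨_, hXB.2.2⟩
  · rintro X (hXA | hXB)
    · exact hXA.1
    · exact hXB.1.le
end

section
/- The collection F' is a matroid collection: (M1) the empty finset belongs to F'; (M2) if X ∈ F' and Y ⊆ X then Y ∈ F'; (M3) for all X, Y ∈ F' with X.card > Y.card there exists x ∈ X \ Y with insert x Y ∈ F'. -/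
open Sum

lemma injOn_aux {n I : ℕ} (Z : Finset ((Fin n × Bool) ⊕ Fin I))
    (hZ : ∀ i : Fin n, ¬(inl (i, true) ∈ Z ∧ inl (i, false) ∈ Z)) :
    Set.InjOn (Sum.map Prod.fst id : ((Fin n × Bool) ⊕ Fin I) → (Fin n ⊕ Fin I)) ↑Z := by
  rintro (⟨i, s⟩ | j) ha (⟨i', s'⟩ | j') hb hab <;> simp_all
  rcases hab with rfl
  by_contra hne
  cases s <;> cases s' <;> simp_all <;>
    first | exact hZ i ⟨hb, ha⟩ | exact hZ i ⟨ha, hb⟩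

/-- The collection `F'` (subsets of the padded domain
`(Fin n × Bool) ⊕ Fin I` never containing both `inl (i, true)` and `inl (i, false)`)
is a matroid collection: (M1), (M2), (M3). -/
theorem matroid_collection_F' (n I : ℕ) (hn : 1 ≤ n) (hI : 1 ≤ I)
    (F' : Set (Finset ((Fin n × Bool) ⊕ Fin I)))
    (hF' : F' = {X : Finset ((Fin n × Bool) ⊕ Fin I) |
      ∀ i : Fin n, ¬(inl (i, true) ∈ X ∧ inl (i, false) ∈ X)}) :
    (∅ : Finset ((Fin n × Bool) ⊕ Fin I)) ∈ F' ∧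
    (∀ X ∈ F', ∀ Y : Finset ((Fin n × Bool) ⊕ Fin I), Y ⊆ X → Y ∈ F') ∧
    (∀ X ∈ F', ∀ Y ∈ F', Y.card < X.card →
      ∃ x ∈ X \ Y, insert x Y ∈ F') := by
  subst hF'
  refine ⟨by simp, ?_, ?_⟩
  · intro X hX Y hYX i hi
    exact hX i ⟨hYX hi.1, hYX hi.2⟩
  · intro X hX Y hY hcard
    set f : ((Fin n × Bool) ⊕ Fin I) → (Fin n ⊕ Fin I) := Sum.map Prod.fst id with hf
    have hXc : (X.image f).card = X.card := Finset.card_image_of_injOn (injOn_aux X hX)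
    have hYc : (Y.image f).card = Y.card := Finset.card_image_of_injOn (injOn_aux Y hY)
    have : ¬ X.image f ⊆ Y.image f := by
      intro hsub
      have := Finset.card_le_card hsub
      omega
    obtain ⟨z, hzX, hzY⟩ := Finset.not_subset.mp this
    obtain ⟨x, hxX, hfx⟩ := Finset.mem_image.mp hzX
    have hxY : x ∉ Y := fun h => hzY (Finset.mem_image.mpr ⟨x, h, hfx⟩)
    refine ⟨x, Finset.mem_sdiff.mpr ⟨hxX, hxY⟩, ?_⟩
    intro i ⟨h1, h2⟩
    rcases Finset.mem_insert.mp h1 with h1 | h1 <;>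
      rcases Finset.mem_insert.mp h2 with h2 | h2
    · rw [← h1] at h2; simp at h2
    · exact hzY (Finset.mem_image.mpr ⟨_, h2, by rw [← hfx, ← h1]; rfl⟩)
    · exact hzY (Finset.mem_image.mpr ⟨_, h1, by rw [← hfx, ← h2]; rfl⟩)
    · exact hY i ⟨h1, h2⟩
end

section
/- The collection G' := A ∪ B ∪ C is a greedoid collection: (M1) the empty finset belongs to G', and (M3) for all X, Y ∈ G' with X.card > Y.card there exists x ∈ X \ Y with insert x Y ∈ G'. -/
open Sum

section GreedoidAux
set_option linter.unusedSectionVars false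
variable {β γ : Type*} [DecidableEq β] [DecidableEq γ]

private def Lf (Z : Finset (β ⊕ γ)) : Finset (β ⊕ γ) := Z.filter (fun x => x.isLeft)
private def Rf (Z : Finset (β ⊕ γ)) : Finset (β ⊕ γ) := Z.filter (fun x => x.isRight)

private lemma mem_Lf {Z : Finset (β ⊕ γ)} {x} : x ∈ Lf Z ↔ x ∈ Z ∧ x.isLeft := by
  simp [Lf]

private lemma mem_Rf {Z : Finset (β ⊕ γ)} {x} : x ∈ Rf Z ↔ x ∈ Z ∧ x.isRight := by
  simp [Rf]

private lemma Lf_card_add_Rf_card (Z : Finset (β ⊕ γ)) :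
    (Lf Z).card + (Rf Z).card = Z.card := by
  classical
  have h : Rf Z = Z.filter (fun x => ¬ (x.isLeft : Prop)) := by
    apply Finset.filter_congr
    intro x _
    rcases x with b | c <;> simp
  rw [h, Lf]
  exact Finset.card_filter_add_card_filter_not _

private lemma Lf_subset (Z : Finset (β ⊕ γ)) : Lf Z ⊆ Z := Finset.filter_subset _ _
private lemma Rf_subset (Z : Finset (β ⊕ γ)) : Rf Z ⊆ Z := Finset.filter_subset _ _

private lemma Lf_union_Rf (Z : Finset (β ⊕ γ)) : Lf Z ∪ Rf Z = Z := by
  ext x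
  rcases x with b | c <;> simp [mem_Lf, mem_Rf]

private lemma Lf_of_all_inl {Z : Finset (β ⊕ γ)} (h : ∀ x ∈ Z, ∃ p : β, x = inl p) :
    Lf Z = Z := by
  apply Finset.filter_true_of_mem
  intro x hx; obtain ⟨p, rfl⟩ := h x hx; simp

private lemma Rf_of_all_inl {Z : Finset (β ⊕ γ)} (h : ∀ x ∈ Z, ∃ p : β, x = inl p) :
    Rf Z = ∅ := by
  apply Finset.filter_false_of_mem
  intro x hx; obtain ⟨p, rfl⟩ := h x hx; simp

private lemma all_inl_Lf (Z : Finset (β ⊕ γ)) : ∀ x ∈ Lf Z, ∃ p : β, x = inl p := by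
  intro x hx
  rcases x with b | c
  · exact ⟨b, rfl⟩
  · simp [mem_Lf] at hx

private lemma all_inr_Rf (Z : Finset (β ⊕ γ)) : ∀ x ∈ Rf Z, ∃ j : γ, x = inr j := by
  intro x hx
  rcases x with b | c
  · simp [mem_Rf] at hx
  · exact ⟨c, rfl⟩

private lemma Lf_union {Y Q : Finset (β ⊕ γ)} (hY : ∀ x ∈ Y, ∃ p : β, x = inl p)
    (hQ : ∀ x ∈ Q, ∃ j : γ, x = inr j) : Lf (Y ∪ Q) = Y := by
  ext x
  simp only [mem_Lf, Finset.mem_union]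
  constructor
  · rintro ⟨hx | hx, hl⟩
    · exact hx
    · obtain ⟨j, rfl⟩ := hQ x hx; simp at hl
  · intro hx
    obtain ⟨p, rfl⟩ := hY x hx
    exact ⟨Or.inl hx, rfl⟩

private lemma Rf_union {Y Q : Finset (β ⊕ γ)} (hY : ∀ x ∈ Y, ∃ p : β, x = inl p)
    (hQ : ∀ x ∈ Q, ∃ j : γ, x = inr j) : Rf (Y ∪ Q) = Q := by
  ext x
  simp only [mem_Rf, Finset.mem_union]
  constructor
  · rintro ⟨hx | hx, hr⟩
    · obtain ⟨p, rfl⟩ := hY x hx; simp at hr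
    · exact hx
  · intro hx
    obtain ⟨j, rfl⟩ := hQ x hx
    exact ⟨Or.inr hx, rfl⟩

end GreedoidAux

/-- The collection `G' := A ∪ B ∪ C` from the Section-3 (padded)
construction is a greedoid collection: (M1) `∅ ∈ G'`, and (M3). -/
theorem greedoid_collection_G' (n I : ℕ) (hn : 1 ≤ n) (hI : 1 ≤ I)
    (φ : (Fin n → Bool) → Prop)
    (ℓ : Fin n) (hℓ : (ℓ : ℕ) = n - 1)
    (A B C G' : Set (Finset ((Fin n × Bool) ⊕ Fin I)))
    (hA : A = {X : Finset ((Fin n × Bool) ⊕ Fin I) |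
      (∀ x ∈ X, ∃ p : Fin n × Bool, x = inl p) ∧ X.card ≤ n ∧
      inl (ℓ, true) ∉ X ∧ inl (ℓ, false) ∉ X})
    (hB : B = {X : Finset ((Fin n × Bool) ⊕ Fin I) |
      (∀ x ∈ X, ∃ p : Fin n × Bool, x = inl p) ∧ X.card = n ∧
      (∀ i : Fin n, (inl (i, true) ∈ X ∨ inl (i, false) ∈ X) ∧
        ¬(inl (i, true) ∈ X ∧ inl (i, false) ∈ X)) ∧
      φ (fun i => decide (inl (i, true) ∈ X))})
    (hC : C = {X : Finset ((Fin n × Bool) ⊕ Fin I) |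
      ∃ Y ∈ A ∪ B, ∃ Q : Finset ((Fin n × Bool) ⊕ Fin I),
        Y.card = n ∧ Q.Nonempty ∧ (∀ x ∈ Q, ∃ j : Fin I, x = inr j) ∧
        X = Y ∪ Q})
    (hG' : G' = A ∪ B ∪ C) :
    (∅ : Finset ((Fin n × Bool) ⊕ Fin I)) ∈ G' ∧
    (∀ X ∈ G', ∀ Y ∈ G', Y.card < X.card →
      ∃ x ∈ X \ Y, insert x Y ∈ G') := by
  classical
  -- basic facts about A ∪ B
  have hAB : ∀ Z ∈ A ∪ B, (∀ x ∈ Z, ∃ p : Fin n × Bool, x = inl p) ∧ Z.card ≤ n := by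
    rintro Z (hZ | hZ)
    · rw [hA] at hZ; exact ⟨hZ.1, hZ.2.1⟩
    · rw [hB] at hZ; exact ⟨hZ.1, le_of_eq hZ.2.1⟩
  -- characterization of G'
  have hmem : ∀ Z : Finset ((Fin n × Bool) ⊕ Fin I),
      Z ∈ G' ↔ (Lf Z ∈ A ∪ B ∧ (Rf Z = ∅ ∨ (Lf Z).card = n)) := by
    intro Z
    rw [hG']
    constructor
    · rintro (hZ | hZ)
      · have h1 := (hAB Z hZ).1
        rw [Lf_of_all_inl h1, Rf_of_all_inl h1]
        exact ⟨hZ, Or.inl rfl⟩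
      · rw [hC] at hZ
        obtain ⟨Y, hY, Q, hYcard, hQne, hQr, rfl⟩ := hZ
        have hYl := (hAB Y hY).1
        rw [Lf_union hYl hQr, Rf_union hYl hQr]
        exact ⟨hY, Or.inr hYcard⟩
    · rintro ⟨hL, hR | hcard⟩
      · left
        have : Z = Lf Z := by
          conv_lhs => rw [← Lf_union_Rf Z]
          rw [hR, Finset.union_empty]
        rwa [this]
      · rcases Finset.eq_empty_or_nonempty (Rf Z) with hR | hR
        · left
          have : Z = Lf Z := by
            conv_lhs => rw [← Lf_union_Rf Z]
            rw [hR, Finset.union_empty]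
          rwa [this]
        · right
          rw [hC]
          exact ⟨Lf Z, hL, Rf Z, hcard, hR, all_inr_Rf Z, (Lf_union_Rf Z).symm⟩
  constructor
  · -- M1
    rw [hG']
    left; left
    rw [hA]
    simp
  · -- M3
    intro X hX Y hY hcard
    obtain ⟨hXL, hXR⟩ := (hmem X).1 hX
    obtain ⟨hYL, hYR⟩ := (hmem Y).1 hY
    have hLXcard : (Lf X).card ≤ n := (hAB _ hXL).2
    have hLYcard : (Lf Y).card ≤ n := (hAB _ hYL).2
    have hcards := Lf_card_add_Rf_card X
    have hcardsY := Lf_card_add_Rf_card Y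
    by_cases hYn : Y.card < n
    · -- Y is "small": Y ∈ A
      -- first: Rf Y = ∅, so Y = Lf Y
      have hRY : Rf Y = ∅ := by
        rcases hYR with h | h
        · exact h
        · exfalso; omega
      have hYeq : Y = Lf Y := by
        conv_lhs => rw [← Lf_union_Rf Y]
        rw [hRY, Finset.union_empty]
      have hYA : Y ∈ A := by
        rcases hYL with h | h
        · rwa [hYeq]
        · exfalso
          rw [hB] at h
          have := h.2.1
          omega
      rw [hA] at hYA
      obtain ⟨hYinl, _, hYt, hYf⟩ := hYA
      -- (Lf X).card > Y.card
      have hLX_gt : Y.card < (Lf X).card := by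
        rcases hXR with h | h
        · rw [h] at hcards
          simp only [Finset.card_empty] at hcards
          omega
        · omega
      -- pick good element
      rcases hXL with hXA | hXB
      · -- Lf X ∈ A : any element of Lf X \ Y works
        have hne : (Lf X \ Y).Nonempty := by
          apply Finset.card_pos.mp
          have := Finset.le_card_sdiff Y (Lf X)
          have h2 : (Lf X).card - Y.card ≤ (Lf X \ Y).card := this
          omega
        obtain ⟨x, hx⟩ := hne
        rw [Finset.mem_sdiff] at hx
        refine ⟨x, ?_, ?_⟩
        · rw [Finset.mem_sdiff]
          exact ⟨Lf_subset X hx.1, hx.2⟩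
        · rw [hG']
          left; left
          rw [hA] at hXA ⊢
          refine ⟨?_, ?_, ?_, ?_⟩
          · intro y hy
            rw [Finset.mem_insert] at hy
            rcases hy with rfl | hy
            · exact hXA.1 _ hx.1
            · exact hYinl y hy
          · have := Finset.card_insert_le x Y
            omega
          · rw [Finset.mem_insert]
            push_neg
            refine ⟨?_, hYt⟩
            rintro rfl
            exact hXA.2.2.1 hx.1
          · rw [Finset.mem_insert]
            push_neg
            refine ⟨?_, hYf⟩
            rintro rfl
            exact hXA.2.2.2 hx.1
      · -- Lf X ∈ B
        have hXB' : Lf X ∈ B := hXB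
        rw [hB] at hXB
        obtain ⟨hXinl, hXn, hXone, hXφ⟩ := hXB
        by_cases hgood : ∃ x ∈ Lf X \ Y, x ≠ inl (ℓ, true) ∧ x ≠ inl (ℓ, false)
        · obtain ⟨x, hx, hxt, hxf⟩ := hgood
          rw [Finset.mem_sdiff] at hx
          refine ⟨x, ?_, ?_⟩
          · rw [Finset.mem_sdiff]
            exact ⟨Lf_subset X hx.1, hx.2⟩
          · rw [hG']
            left; left
            rw [hA]
            refine ⟨?_, ?_, ?_, ?_⟩
            · intro y hy
              rw [Finset.mem_insert] at hy
              rcases hy with rfl | hy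
              · exact hXinl _ hx.1
              · exact hYinl y hy
            · have := Finset.card_insert_le x Y
              omega
            · rw [Finset.mem_insert]; push_neg; exact ⟨Ne.symm hxt, hYt⟩
            · rw [Finset.mem_insert]; push_neg; exact ⟨Ne.symm hxf, hYf⟩
        · -- every element of Lf X \ Y is the ℓ-element; insert it to get Lf X ∈ B
          push_neg at hgood
          -- the ℓ-element x₀ of Lf X
          obtain ⟨hor, hnand⟩ := hXone ℓ
          have key : ∀ x₀, x₀ ∈ Lf X → (x₀ = inl (ℓ, true) ∨ x₀ = inl (ℓ, false)) →
              ∃ x ∈ X \ Y, insert x Y ∈ G' := by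
            intro x₀ hx₀ hx₀eq
            have hx₀Y : x₀ ∉ Y := by
              rcases hx₀eq with rfl | rfl
              · exact hYt
              · exact hYf
            have hsub : Lf X ⊆ insert x₀ Y := by
              intro z hz
              by_cases hzY : z ∈ Y
              · exact Finset.mem_insert_of_mem hzY
              · have hz' : z ∈ Lf X \ Y := Finset.mem_sdiff.mpr ⟨hz, hzY⟩
                have := hgood z hz'
                have hzeq : z = inl (ℓ, true) ∨ z = inl (ℓ, false) := by
                  by_contra hcon
                  push_neg at hcon
                  exact absurd hcon.2 (by
                    have := hgood z hz'
                    by_contra h'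
                    exact h' ((this hcon.1)))
                -- z equals x₀ since both are ℓ-elements of Lf X and not both in Lf X
                have : z = x₀ := by
                  rcases hzeq with rfl | rfl <;> rcases hx₀eq with rfl | rfl
                  · rfl
                  · exact absurd ⟨hz, hx₀⟩ hnand
                  · exact absurd ⟨hx₀, hz⟩ hnand
                  · rfl
                rw [this]
                exact Finset.mem_insert_self _ _
            have hins_card : (insert x₀ Y).card ≤ (Lf X).card := by
              have := Finset.card_insert_le x₀ Y
              omega
            have heq : insert x₀ Y = Lf X :=
              Finset.eq_of_subset_of_card_le hsub hins_card |>.symm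
            refine ⟨x₀, Finset.mem_sdiff.mpr ⟨Lf_subset X hx₀, hx₀Y⟩, ?_⟩
            rw [hG']
            left; right
            rw [heq]
            exact hXB'
          rcases hor with h | h
          · exact key _ h (Or.inl rfl)
          · exact key _ h (Or.inr rfl)
    · -- Y is "big": insert an inr element
      push_neg at hYn
      have hLYn : (Lf Y).card = n := by
        rcases hYR with h | h
        · rw [h] at hcardsY
          simp only [Finset.card_empty] at hcardsY
          omega
        · exact h
      have hRX_gt : (Rf Y).card < (Rf X).card := by omega
      have hne : (Rf X \ Rf Y).Nonempty := by
        apply Finset.card_pos.mp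
        have := Finset.le_card_sdiff (Rf Y) (Rf X)
        omega
      obtain ⟨q, hq⟩ := hne
      rw [Finset.mem_sdiff] at hq
      obtain ⟨j, rfl⟩ := all_inr_Rf X q hq.1
      have hqY : inr j ∉ Y := by
        intro h
        exact hq.2 (mem_Rf.mpr ⟨h, rfl⟩)
      refine ⟨inr j, Finset.mem_sdiff.mpr ⟨Rf_subset X hq.1, hqY⟩, ?_⟩
      rw [hmem]
      have hL' : Lf (insert (inr j) Y) = Lf Y := by
        simp [Lf, Finset.filter_insert]
      rw [hL']
      exact ⟨hYL, Or.inr hLYn⟩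
end

section
/- φ has a satisfying assignment (∃ Z, φ Z) if and only if there exists a finset X with X ∈ F', X ∈ G' and X.card = n + I (i.e. X has size |S'| − n, consisting of a satisfying truth assignment together with all I padding elements). -/
open Sum Finset

/-!
Sets in `A ∪ B` have at most `n` elements, so a set of size `n + I` in `G'` lies in `C` and is
`Y ∪ Q` with `|Y| = n`. If `Y ∈ A`, then `Y ∪ Q ∈ F'` makes `Y` a consistent set of `n` literals
over the `n - 1` variables other than `ℓ`, which the pigeonhole principle forbids; hence `Y ∈ B`
and `Y` encodes a satisfying assignment. Conversely, the literals of a satisfying assignment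
together with all `I` padding elements form such a set.
-/

namespace PaddedSat

variable {σ ι : Type*} [Fintype σ]

theorem card_lt_of_consistent_of_notMem {s : Finset (σ × Bool)}
    (hs : ∀ i, ¬((i, true) ∈ s ∧ (i, false) ∈ s)) {ℓ : σ}
    (ht : (ℓ, true) ∉ s) (hf : (ℓ, false) ∉ s) : #s < Fintype.card σ := by
  have hinj : Set.InjOn Prod.fst (s : Set (σ × Bool)) := by
    rintro ⟨i, b⟩ hb ⟨j, c⟩ hc (rfl : i = j)
    cases b <;> cases c <;> first | rfl | exact absurd ⟨‹_›, ‹_›⟩ (hs i)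
  classical
  have hℓ : ℓ ∉ s.image Prod.fst := by
    simp only [mem_image, Prod.exists, exists_and_right, exists_eq_right, not_exists]
    rintro (_ | _) <;> assumption
  exact card_image_of_injOn hinj ▸ card_lt_univ_of_notMem hℓ

theorem card_lt_of_consistent_of_inl_notMem {Y : Finset ((σ × Bool) ⊕ ι)}
    (hY : ∀ x ∈ Y, ∃ p, x = inl p) (hs : ∀ i, ¬(inl (i, true) ∈ Y ∧ inl (i, false) ∈ Y))
    {ℓ : σ} (ht : inl (ℓ, true) ∉ Y) (hf : inl (ℓ, false) ∉ Y) : #Y < Fintype.card σ := by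
  have hright : Y.toRight = ∅ := eq_empty_of_forall_notMem fun j hj => by
    obtain ⟨p, hp⟩ := hY _ (mem_toRight.1 hj)
    cases hp
  calc #Y = #Y.toLeft := by rw [← card_toLeft_add_card_toRight, hright, card_empty, add_zero]
    _ < Fintype.card σ :=
      card_lt_of_consistent_of_notMem (by simpa using hs) (by simpa using ht) (by simpa using hf)

def assignmentLiterals (Z : σ → Bool) : Finset (σ × Bool) :=
  univ.map ⟨fun i => (i, Z i), fun _ _ h => (Prod.mk.inj h).1⟩

@[simp]
theorem mem_assignmentLiterals {Z : σ → Bool} {i : σ} {b : Bool} :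
    (i, b) ∈ assignmentLiterals Z ↔ Z i = b := by
  rw [assignmentLiterals, mem_map]
  exact ⟨fun ⟨_, _, h⟩ => by obtain ⟨rfl, rfl⟩ := Prod.mk.inj h; rfl,
    fun h => ⟨i, mem_univ i, by rw [← h]; rfl⟩⟩

theorem card_assignmentLiterals (Z : σ → Bool) : #(assignmentLiterals Z) = Fintype.card σ := by
  simp [assignmentLiterals]

end PaddedSat

open PaddedSat

theorem sat_iff_padded_intersection_general (n I : ℕ) (hI : 1 ≤ I)
    (φ : (Fin n → Bool) → Prop)
    (ℓ : Fin n)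
    (F' A B C G' : Set (Finset ((Fin n × Bool) ⊕ Fin I)))
    (hF' : F' = {X : Finset ((Fin n × Bool) ⊕ Fin I) |
      ∀ i : Fin n, ¬(inl (i, true) ∈ X ∧ inl (i, false) ∈ X)})
    (hA : A = {X : Finset ((Fin n × Bool) ⊕ Fin I) |
      (∀ x ∈ X, ∃ p : Fin n × Bool, x = inl p) ∧ X.card ≤ n ∧
      inl (ℓ, true) ∉ X ∧ inl (ℓ, false) ∉ X})
    (hB : B = {X : Finset ((Fin n × Bool) ⊕ Fin I) |
      (∀ x ∈ X, ∃ p : Fin n × Bool, x = inl p) ∧ X.card = n ∧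
      (∀ i : Fin n, (inl (i, true) ∈ X ∨ inl (i, false) ∈ X) ∧
        ¬(inl (i, true) ∈ X ∧ inl (i, false) ∈ X)) ∧
      φ (fun i => decide (inl (i, true) ∈ X))})
    (hC : C = {X : Finset ((Fin n × Bool) ⊕ Fin I) |
      ∃ Y ∈ A ∪ B, ∃ Q : Finset ((Fin n × Bool) ⊕ Fin I),
        Y.card = n ∧ Q.Nonempty ∧ (∀ x ∈ Q, ∃ j : Fin I, x = inr j) ∧
        X = Y ∪ Q})
    (hG' : G' = A ∪ B ∪ C) :
    (∃ Z : Fin n → Bool, φ Z) ↔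
      ∃ X : Finset ((Fin n × Bool) ⊕ Fin I),
        X ∈ F' ∧ X ∈ G' ∧ X.card = n + I := by
  subst hF' hA hB hC hG'
  constructor
  · rintro ⟨Z, hZ⟩
    set Y := (assignmentLiterals Z).map (Function.Embedding.inl : _ ↪ _ ⊕ Fin I)
    set Q := (univ : Finset (Fin I)).map Function.Embedding.inr
    have hYcard : #Y = n := by simp [Y, card_assignmentLiterals]
    refine ⟨Y ∪ Q, by simp [Y, Q],
      Or.inr ⟨Y, Or.inr ⟨fun x hx => ?_, hYcard, fun i => ?_, ?_⟩,
        Q, hYcard, ⟨inr ⟨0, hI⟩, by simp [Q]⟩, by simp [Q], rfl⟩, ?_⟩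
    · obtain ⟨p, -, rfl⟩ := mem_map.1 hx
      exact ⟨p, rfl⟩
    · simp [Y]
    · convert hZ
      simp [Y]
    rw [card_union_of_disjoint (disjoint_map_inl_map_inr _ _), hYcard, card_map, card_univ,
      Fintype.card_fin]
  · rintro ⟨X, hXF, (⟨-, hcard, -⟩ | ⟨-, hcard, -⟩) | ⟨Y, hY, Q, hYcard, -, -, rfl⟩, hXcard⟩
    · omega
    · omega
    · obtain ⟨hlit, -, ht, hf⟩ | ⟨-, -, -, hφ⟩ := hY
      · have hYcons : ∀ i, ¬(inl (i, true) ∈ Y ∧ inl (i, false) ∈ Y) :=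
          fun i h => hXF i ⟨mem_union_left Q h.1, mem_union_left Q h.2⟩
        exact absurd (hYcard.trans (Fintype.card_fin n).symm)
          (card_lt_of_consistent_of_inl_notMem hlit hYcons ht hf).ne
      · exact ⟨_, hφ⟩

/-- `φ` has a satisfying assignment iff the intersection `F' ∩ G'`
of the padded construction contains a set of size `n + I` (i.e. `|S'| − n`). -/
theorem sat_iff_padded_intersection (n I : ℕ) (hn : 1 ≤ n) (hI : 1 ≤ I)
    (φ : (Fin n → Bool) → Prop)
    (ℓ : Fin n) (hℓ : (ℓ : ℕ) = n - 1)
    (F' A B C G' : Set (Finset ((Fin n × Bool) ⊕ Fin I)))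
    (hF' : F' = {X : Finset ((Fin n × Bool) ⊕ Fin I) |
      ∀ i : Fin n, ¬(inl (i, true) ∈ X ∧ inl (i, false) ∈ X)})
    (hA : A = {X : Finset ((Fin n × Bool) ⊕ Fin I) |
      (∀ x ∈ X, ∃ p : Fin n × Bool, x = inl p) ∧ X.card ≤ n ∧
      inl (ℓ, true) ∉ X ∧ inl (ℓ, false) ∉ X})
    (hB : B = {X : Finset ((Fin n × Bool) ⊕ Fin I) |
      (∀ x ∈ X, ∃ p : Fin n × Bool, x = inl p) ∧ X.card = n ∧
      (∀ i : Fin n, (inl (i, true) ∈ X ∨ inl (i, false) ∈ X) ∧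
        ¬(inl (i, true) ∈ X ∧ inl (i, false) ∈ X)) ∧
      φ (fun i => decide (inl (i, true) ∈ X))})
    (hC : C = {X : Finset ((Fin n × Bool) ⊕ Fin I) |
      ∃ Y ∈ A ∪ B, ∃ Q : Finset ((Fin n × Bool) ⊕ Fin I),
        Y.card = n ∧ Q.Nonempty ∧ (∀ x ∈ Q, ∃ j : Fin I, x = inr j) ∧
        X = Y ∪ Q})
    (hG' : G' = A ∪ B ∪ C) :
    (∃ Z : Fin n → Bool, φ Z) ↔
      ∃ X : Finset ((Fin n × Bool) ⊕ Fin I),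
        X ∈ F' ∧ X ∈ G' ∧ X.card = n + I :=
  sat_iff_padded_intersection_general n I hI φ ℓ F' A B C G' hF' hA hB hC hG'
end

section
/- If φ has no satisfying assignment (¬∃ Z, φ Z), then every finset X with X ∈ F' and X ∈ G' satisfies X.card ≤ n − 1. -/
open Sum

/-!
An unsatisfiable `φ` empties `B`, so every set of `G'` is built from a set of `A`. A set of `A`
that also lies in `F'` contains at most one of `t_i`, `f_i` for each index `i` and neither for the
last index `ℓ`; projecting to the index is therefore injective and misses `ℓ`, so it has fewer
than `n` elements. The sets of `C` lie in `F'` only through such a set of size `n`, which is impossible.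
-/

open Finset

variable {ι β : Type*} [Fintype ι]

lemma card_lt_of_not_both_of_avoid (ℓ : ι) (Y : Finset (ι × Bool))
    (hY : ∀ i, ¬((i, true) ∈ Y ∧ (i, false) ∈ Y))
    (hℓt : (ℓ, true) ∉ Y) (hℓf : (ℓ, false) ∉ Y) :
    #Y < Fintype.card ι := by
  classical
  have hinj : Set.InjOn Prod.fst (Y : Set (ι × Bool)) := by
    rintro ⟨i, b⟩ hx ⟨j, c⟩ hy (rfl : i = j)
    cases b <;> cases c
    exacts [rfl, (hY i ⟨hy, hx⟩).elim, (hY i ⟨hx, hy⟩).elim, rfl]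
  have hℓ : ℓ ∉ Y.image Prod.fst := by
    intro h
    obtain ⟨⟨_, b⟩, hb, rfl⟩ := mem_image.mp h
    cases b
    exacts [hℓf hb, hℓt hb]
  rw [← card_image_of_injOn hinj]
  exact card_lt_univ_of_notMem hℓ

lemma card_lt_of_forall_inl_of_not_both_of_avoid (ℓ : ι) (X : Finset ((ι × Bool) ⊕ β))
    (hinl : ∀ x ∈ X, ∃ p, x = inl p)
    (hX : ∀ i, ¬(inl (i, true) ∈ X ∧ inl (i, false) ∈ X))
    (hℓt : inl (ℓ, true) ∉ X) (hℓf : inl (ℓ, false) ∉ X) :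
    #X < Fintype.card ι := by
  have hright : X.toRight = ∅ := by
    refine eq_empty_of_forall_notMem fun b hb => ?_
    obtain ⟨p, hp⟩ := hinl _ (mem_toRight.mp hb)
    exact inr_ne_inl hp
  have hcard : #X.toLeft = #X := by
    simpa [hright] using card_toLeft_add_card_toRight (u := X)
  rw [← hcard]
  exact card_lt_of_not_both_of_avoid ℓ X.toLeft (by simpa using hX) (by simpa) (by simpa)

theorem unsat_intersection_small_general (n I : ℕ)
    (φ : (Fin n → Bool) → Prop)
    (ℓ : Fin n)
    (F' A B C G' : Set (Finset ((Fin n × Bool) ⊕ Fin I)))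
    (hF' : F' = {X : Finset ((Fin n × Bool) ⊕ Fin I) |
      ∀ i : Fin n, ¬(inl (i, true) ∈ X ∧ inl (i, false) ∈ X)})
    (hA : A = {X : Finset ((Fin n × Bool) ⊕ Fin I) |
      (∀ x ∈ X, ∃ p : Fin n × Bool, x = inl p) ∧ X.card ≤ n ∧
      inl (ℓ, true) ∉ X ∧ inl (ℓ, false) ∉ X})
    (hB : B = {X : Finset ((Fin n × Bool) ⊕ Fin I) |
      (∀ x ∈ X, ∃ p : Fin n × Bool, x = inl p) ∧ X.card = n ∧
      (∀ i : Fin n, (inl (i, true) ∈ X ∨ inl (i, false) ∈ X) ∧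
        ¬(inl (i, true) ∈ X ∧ inl (i, false) ∈ X)) ∧
      φ (fun i => decide (inl (i, true) ∈ X))})
    (hC : C = {X : Finset ((Fin n × Bool) ⊕ Fin I) |
      ∃ Y ∈ A ∪ B, ∃ Q : Finset ((Fin n × Bool) ⊕ Fin I),
        Y.card = n ∧ Q.Nonempty ∧ (∀ x ∈ Q, ∃ j : Fin I, x = inr j) ∧
        X = Y ∪ Q})
    (hG' : G' = A ∪ B ∪ C)
    (hunsat : ¬∃ Z : Fin n → Bool, φ Z) :
    ∀ X : Finset ((Fin n × Bool) ⊕ Fin I),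
      X ∈ F' → X ∈ G' → X.card ≤ n - 1 := by
  have hA_small : ∀ Y ∈ A, Y ∈ F' → #Y < n := by
    rw [hA, hF']
    rintro Y ⟨hinl, -, hℓt, hℓf⟩ hY
    simpa using card_lt_of_forall_inl_of_not_both_of_avoid ℓ Y hinl hY hℓt hℓf
  have hB_empty : B = ∅ := by
    rw [hB, Set.eq_empty_iff_forall_notMem]
    exact fun Y hY => hunsat ⟨_, hY.2.2.2⟩
  have hF'_mono : ∀ Y Q, Y ∪ Q ∈ F' → Y ∈ F' := by
    rw [hF']
    exact fun Y Q hYQ i hi => hYQ i (hi.imp (mem_union_left Q) (mem_union_left Q))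
  rw [hG', hC, hB_empty, Set.union_empty]
  rintro X hXF (hXA | ⟨Y, hYA, Q, hYn, -, -, rfl⟩)
  · have := hA_small X hXA hXF
    omega
  · have := hA_small Y hYA (hF'_mono Y Q hXF)
    omega

/-- If `φ` has no satisfying assignment, then every set in the
intersection `F' ∩ G'` of the padded construction has size at most `n − 1`. -/
theorem unsat_intersection_small (n I : ℕ) (hn : 1 ≤ n) (hI : 1 ≤ I)
    (φ : (Fin n → Bool) → Prop)
    (ℓ : Fin n) (hℓ : (ℓ : ℕ) = n - 1)
    (F' A B C G' : Set (Finset ((Fin n × Bool) ⊕ Fin I)))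
    (hF' : F' = {X : Finset ((Fin n × Bool) ⊕ Fin I) |
      ∀ i : Fin n, ¬(inl (i, true) ∈ X ∧ inl (i, false) ∈ X)})
    (hA : A = {X : Finset ((Fin n × Bool) ⊕ Fin I) |
      (∀ x ∈ X, ∃ p : Fin n × Bool, x = inl p) ∧ X.card ≤ n ∧
      inl (ℓ, true) ∉ X ∧ inl (ℓ, false) ∉ X})
    (hB : B = {X : Finset ((Fin n × Bool) ⊕ Fin I) |
      (∀ x ∈ X, ∃ p : Fin n × Bool, x = inl p) ∧ X.card = n ∧
      (∀ i : Fin n, (inl (i, true) ∈ X ∨ inl (i, false) ∈ X) ∧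
        ¬(inl (i, true) ∈ X ∧ inl (i, false) ∈ X)) ∧
      φ (fun i => decide (inl (i, true) ∈ X))})
    (hC : C = {X : Finset ((Fin n × Bool) ⊕ Fin I) |
      ∃ Y ∈ A ∪ B, ∃ Q : Finset ((Fin n × Bool) ⊕ Fin I),
        Y.card = n ∧ Q.Nonempty ∧ (∀ x ∈ Q, ∃ j : Fin I, x = inr j) ∧
        X = Y ∪ Q})
    (hG' : G' = A ∪ B ∪ C)
    (hunsat : ¬∃ Z : Fin n → Bool, φ Z) :
    ∀ X : Finset ((Fin n × Bool) ⊕ Fin I),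
      X ∈ F' → X ∈ G' → X.card ≤ n - 1 :=
  unsat_intersection_small_general n I φ ℓ F' A B C G' hF' hA hB hC hG' hunsat
end

section
/- The collection G'' := A ∪ B is a greedoid collection: (M1) the empty finset belongs to G'', and (M3) for all X, Y ∈ G'' with X.card > Y.card there exists x ∈ X \ Y with insert x Y ∈ G''. -/
open Sum

lemma cardB_aux {n : ℕ} (X : Finset ((Fin n × Bool) ⊕ Unit))
    (heX : inr () ∈ X)
    (h2 : ∀ i : Fin n, (inl (i, true) ∈ X ∨ inl (i, false) ∈ X) ∧
        ¬(inl (i, true) ∈ X ∧ inl (i, false) ∈ X)) :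
    X.card = n + 1 := by
  classical
  have key : X.card = (Finset.univ : Finset (Option (Fin n))).card := by
    apply Finset.card_bij' (fun x _ => Sum.elim (fun p => some p.1) (fun _ => none) x)
      (fun y _ => Option.elim y (inr ())
        (fun i => if inl (i, true) ∈ X then inl (i, true) else inl (i, false)))
    · intro a _; exact Finset.mem_univ _
    · intro y _
      match y with
      | none => exact heX
      | some i =>
        simp only [Option.elim]
        split
        · assumption
        · rcases (h2 i).1 with h | h
          · tauto
          · exact h
    · intro a ha
      match a with
      | inr () => rfl
      | inl (i, b) =>
        simp only [Sum.elim_inl, Option.elim]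
        cases b
        · have : inl (i, true) ∉ X := fun h => (h2 i).2 ⟨h, ha⟩
          simp [this]
        · simp [ha]
    · intro y _
      match y with
      | none => rfl
      | some i => simp only [Option.elim]; split <;> rfl
  simpa using key

/-- The collection `G'' := A ∪ B` from the Theorem-3 (weighted greedoid
maximization) construction is a greedoid collection: (M1) `∅ ∈ G''`, and (M3). -/
theorem greedoid_collection_G'' (n : ℕ) (hn : 1 ≤ n)
    (φ : (Fin n → Bool) → Prop)
    (e : (Fin n × Bool) ⊕ Unit) (he : e = inr ())
    (A B G'' : Set (Finset ((Fin n × Bool) ⊕ Unit)))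
    (hA : A = {X : Finset ((Fin n × Bool) ⊕ Unit) | e ∉ X ∧ X.card ≤ n + 1})
    (hB : B = {X : Finset ((Fin n × Bool) ⊕ Unit) |
      e ∈ X ∧
      (∀ i : Fin n, (inl (i, true) ∈ X ∨ inl (i, false) ∈ X) ∧
        ¬(inl (i, true) ∈ X ∧ inl (i, false) ∈ X)) ∧
      (∀ x ∈ X, x = e ∨ ∃ p : Fin n × Bool, x = inl p) ∧
      φ (fun i => decide (inl (i, true) ∈ X))})
    (hG'' : G'' = A ∪ B) :
    (∅ : Finset ((Fin n × Bool) ⊕ Unit)) ∈ G'' ∧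
    (∀ X ∈ G'', ∀ Y ∈ G'', Y.card < X.card →
      ∃ x ∈ X \ Y, insert x Y ∈ G'') := by

  classical
  subst he hA hB hG''
  constructor
  · left; simp
  · intro X hX Y hY hcard
    -- X.card ≤ n+1 in all cases
    have hXcard : X.card ≤ n + 1 := by
      rcases hX with hX | hX
      · exact hX.2
      · exact le_of_eq (cardB_aux X hX.1 hX.2.1)
    -- Y must be in A
    have hYA : inr () ∉ Y ∧ Y.card ≤ n + 1 := by
      rcases hY with hY | hY
      · exact hY
      · exfalso
        have := cardB_aux Y hY.1 hY.2.1
        omega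
    obtain ⟨heY, hYle⟩ := hYA
    rcases hX with hX | hX
    · -- X ∈ A
      obtain ⟨heX, hXle⟩ := hX
      have hne : (X \ Y).Nonempty := by
        rw [← Finset.card_pos]
        have := Finset.le_card_sdiff Y X
        omega
      obtain ⟨x, hx⟩ := hne
      refine ⟨x, hx, Or.inl ⟨?_, ?_⟩⟩
      · intro hmem
        rcases Finset.mem_insert.mp hmem with h | h
        · exact heX (h ▸ (Finset.mem_sdiff.mp hx).1)
        · exact heY h
      · calc (insert x Y).card ≤ Y.card + 1 := Finset.card_insert_le _ _
          _ ≤ X.card := by omega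
          _ ≤ n + 1 := hXle
    · -- X ∈ B
      have hXB := hX
      obtain ⟨heX, h2, h3, h4⟩ := hX
      have hXc : X.card = n + 1 := cardB_aux X heX h2
      by_cases h : ∃ x ∈ X, x ∉ Y ∧ x ≠ inr ()
      · obtain ⟨x, hxX, hxY, hxe⟩ := h
        refine ⟨x, Finset.mem_sdiff.mpr ⟨hxX, hxY⟩, Or.inl ⟨?_, ?_⟩⟩
        · intro hmem
          rcases Finset.mem_insert.mp hmem with hh | hh
          · exact hxe hh.symm
          · exact heY hh
        · calc (insert x Y).card ≤ Y.card + 1 := Finset.card_insert_le _ _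
            _ ≤ n + 1 := by omega
      · push_neg at h
        have hsub : X ⊆ insert (inr ()) Y := by
          intro x hxX
          by_cases hxY : x ∈ Y
          · exact Finset.mem_insert_of_mem hxY
          · exact Finset.mem_insert.mpr (Or.inl (h x hxX hxY))
        have hic : (insert (inr ()) Y).card ≤ X.card := by
          calc (insert (inr ()) Y).card ≤ Y.card + 1 := Finset.card_insert_le _ _
            _ ≤ X.card := by omega
        have heq : insert (inr ()) Y = X := Eq.symm <|
          Finset.eq_of_subset_of_card_le hsub hic
        exact ⟨inr (), Finset.mem_sdiff.mpr ⟨heX, heY⟩, Or.inr (heq ▸ hXB)⟩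
end

section
/- If φ has no satisfying assignment (¬∃ Z, φ Z), then the maximum weight of a set in G'' is n + 1: every X ∈ G'' satisfies w(X) ≤ n + 1, and there exists X ∈ G'' with w(X) = n + 1. -/
open Sum

/-- If `φ` has no satisfying assignment, then the maximum weight of a
set in `G''` is `n + 1`: every `X ∈ G''` has `w(X) ≤ n + 1`, and some `X ∈ G''`
attains `w(X) = n + 1`. -/
theorem unsat_max_weight (n : ℕ) (hn : 1 ≤ n)
    (φ : (Fin n → Bool) → Prop)
    (e : (Fin n × Bool) ⊕ Unit) (he : e = inr ())
    (A B G'' : Set (Finset ((Fin n × Bool) ⊕ Unit)))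
    (hA : A = {X : Finset ((Fin n × Bool) ⊕ Unit) | e ∉ X ∧ X.card ≤ n + 1})
    (hB : B = {X : Finset ((Fin n × Bool) ⊕ Unit) |
      e ∈ X ∧
      (∀ i : Fin n, (inl (i, true) ∈ X ∨ inl (i, false) ∈ X) ∧
        ¬(inl (i, true) ∈ X ∧ inl (i, false) ∈ X)) ∧
      (∀ x ∈ X, x = e ∨ ∃ p : Fin n × Bool, x = inl p) ∧
      φ (fun i => decide (inl (i, true) ∈ X))})
    (hG'' : G'' = A ∪ B)
    (c : ℕ) (hc : 1 ≤ c)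
    (w : (Fin n × Bool) ⊕ Unit → ℕ)
    (hwe : w e = c) (hwl : ∀ p : Fin n × Bool, w (inl p) = 1)
    (hunsat : ¬∃ Z : Fin n → Bool, φ Z) :
    (∀ X ∈ G'', ∑ x ∈ X, w x ≤ n + 1) ∧
    (∃ X ∈ G'', ∑ x ∈ X, w x = n + 1) := by
  have hBempty : B = ∅ := by
    rw [hB]
    ext X
    simp only [Set.mem_setOf_eq, Set.mem_empty_iff_false, iff_false]
    rintro ⟨-, -, -, hφ⟩
    exact hunsat ⟨_, hφ⟩
  have hG : G'' = A := by rw [hG'', hBempty, Set.union_empty]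
  -- key: sums over sets not containing e equal card
  have hsum : ∀ X : Finset ((Fin n × Bool) ⊕ Unit), e ∉ X →
      ∑ x ∈ X, w x = X.card := by
    intro X heX
    rw [Finset.card_eq_sum_ones]
    apply Finset.sum_congr rfl
    intro x hx
    rcases x with p | u
    · exact hwl p
    · exfalso; apply heX; rwa [he, show inr () = inr u by cases u; rfl]
  constructor
  · intro X hX
    rw [hG, hA] at hX
    obtain ⟨heX, hcard⟩ := hX
    rw [hsum X heX]
    exact_mod_cast hcard
  · refine ⟨(Finset.univ.image fun i : Fin n => (inl (i, true) : (Fin n × Bool) ⊕ Unit))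
      ∪ {inl (⟨0, hn⟩, false)}, ?_, ?_⟩
    · rw [hG, hA]
      constructor
      · simp [he]
      · apply le_trans (Finset.card_union_le _ _)
        simp only [Finset.card_singleton]
        have := Finset.card_image_le (f := fun i : Fin n => (inl (i, true) : (Fin n × Bool) ⊕ Unit)) (s := Finset.univ)
        simp only [Finset.card_univ, Fintype.card_fin] at this
        omega
    · have heX : e ∉ (Finset.univ.image fun i : Fin n => (inl (i, true) : (Fin n × Bool) ⊕ Unit))
          ∪ {inl (⟨0, hn⟩, false)} := by simp [he]
      rw [hsum _ heX, Finset.card_union_of_disjoint (by simp),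
        Finset.card_image_of_injective _ (by intro a b h; simpa using h)]
      simp
end

section
/- If φ has a satisfying assignment (∃ Z, φ Z), then the maximum weight of a set in G'' is c + n: every X ∈ G'' satisfies w(X) ≤ c + n, and there exists X ∈ G'' with w(X) = c + n. (With the paper's choice c = (n+1)·2^{(2n+1)^k} − n + 1 this maximum equals (n+1)·2^{(2n+1)^k} + 1.) -/
open Sum

lemma assign_mem (n : ℕ) (f : Fin n → Bool) (i : Fin n) (b : Bool) :
    (inl (i, b) : (Fin n × Bool) ⊕ Unit) ∈
      insert (inr () : (Fin n × Bool) ⊕ Unit)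
        ((Finset.univ : Finset (Fin n)).image fun j => inl (j, f j)) ↔ f i = b := by
  simp only [Finset.mem_insert, Finset.mem_image, Finset.mem_univ, true_and]
  constructor
  · rintro (h | ⟨j, hj⟩)
    · exact absurd h (by simp)
    · obtain ⟨h1, h2⟩ := by simpa [Prod.ext_iff] using hj
      subst h1; exact h2
  · intro h; exact Or.inr ⟨i, by simp [h]⟩

lemma assign_sum (n c : ℕ) (w : (Fin n × Bool) ⊕ Unit → ℕ)
    (hwe : w (inr ()) = c) (hwl : ∀ p : Fin n × Bool, w (inl p) = 1)
    (f : Fin n → Bool) :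
    ∑ x ∈ insert (inr () : (Fin n × Bool) ⊕ Unit)
        ((Finset.univ : Finset (Fin n)).image fun j => inl (j, f j)), w x = c + n := by
  rw [Finset.sum_insert (by simp), hwe,
    Finset.sum_image (by
      intro a _ b _ h
      have h2 : a = b ∧ f a = f b := by simpa [Prod.ext_iff] using h
      exact h2.1)]
  simp [hwl]

/-- If `φ` has a satisfying assignment, then the maximum weight of a
set in `G''` is `c + n`: every `X ∈ G''` has `w(X) ≤ c + n`, and some `X ∈ G''`
attains `w(X) = c + n`. -/
theorem sat_max_weight (n : ℕ) (hn : 1 ≤ n)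
    (φ : (Fin n → Bool) → Prop)
    (e : (Fin n × Bool) ⊕ Unit) (he : e = inr ())
    (A B G'' : Set (Finset ((Fin n × Bool) ⊕ Unit)))
    (hA : A = {X : Finset ((Fin n × Bool) ⊕ Unit) | e ∉ X ∧ X.card ≤ n + 1})
    (hB : B = {X : Finset ((Fin n × Bool) ⊕ Unit) |
      e ∈ X ∧
      (∀ i : Fin n, (inl (i, true) ∈ X ∨ inl (i, false) ∈ X) ∧
        ¬(inl (i, true) ∈ X ∧ inl (i, false) ∈ X)) ∧
      (∀ x ∈ X, x = e ∨ ∃ p : Fin n × Bool, x = inl p) ∧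
      φ (fun i => decide (inl (i, true) ∈ X))})
    (hG'' : G'' = A ∪ B)
    (c : ℕ) (hc : 1 ≤ c)
    (w : (Fin n × Bool) ⊕ Unit → ℕ)
    (hwe : w e = c) (hwl : ∀ p : Fin n × Bool, w (inl p) = 1)
    (hsat : ∃ Z : Fin n → Bool, φ Z) :
    (∀ X ∈ G'', ∑ x ∈ X, w x ≤ c + n) ∧
    (∃ X ∈ G'', ∑ x ∈ X, w x = c + n) := by
  subst he hA hB hG''
  obtain ⟨Z, hZ⟩ := hsat
  constructor
  · rintro X (⟨heX, hcard⟩ | ⟨heX, hone, hstr, hφ⟩)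
    · have h1 : ∀ x ∈ X, w x = 1 := by
        rintro (p | u) hx
        · exact hwl p
        · cases u; exact absurd hx heX
      calc ∑ x ∈ X, w x = X.card := by
            rw [Finset.sum_congr rfl h1, Finset.sum_const, smul_eq_mul, mul_one]
        _ ≤ n + 1 := hcard
        _ ≤ c + n := by omega
    · -- X = insert e (image ...)
      set f : Fin n → Bool := fun i => decide (inl (i, true) ∈ X) with hf
      have hX : X = insert (inr () : (Fin n × Bool) ⊕ Unit)
          ((Finset.univ : Finset (Fin n)).image fun j => inl (j, f j)) := by
        ext x
        constructor
        · intro hx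
          rcases hstr x hx with h | ⟨⟨i, b⟩, rfl⟩
          · simp [h]
          · rw [assign_mem]
            cases b
            · have := (hone i).2
              have ht : inl (i, true) ∉ X := fun h => this ⟨h, hx⟩
              simp [hf, ht]
            · simp [hf, hx]
        · intro hx
          rcases Finset.mem_insert.mp hx with h | h
          · subst h; exact heX
          · obtain ⟨j, -, rfl⟩ := Finset.mem_image.mp h
            by_cases hm : inl (j, true) ∈ X
            · have hfj : f j = true := by simp [hf, hm]
              simpa [hfj] using hm
            · have hfj : f j = false := by simp [hf, hm]
              rcases (hone j).1 with h' | h'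
              · exact absurd h' hm
              · simpa [hfj] using h'
      rw [hX, assign_sum n c w hwe hwl]
  · refine ⟨insert (inr () : (Fin n × Bool) ⊕ Unit)
      ((Finset.univ : Finset (Fin n)).image fun j => inl (j, Z j)), Or.inr ⟨by simp, ?_, ?_, ?_⟩,
      assign_sum n c w hwe hwl Z⟩
    · intro i
      constructor
      · cases hzi : Z i
        · exact Or.inr ((assign_mem n Z i false).mpr hzi)
        · exact Or.inl ((assign_mem n Z i true).mpr hzi)
      · rintro ⟨h1, h2⟩
        rw [assign_mem] at h1 h2
        simp [h1] at h2
    · rintro (p | u) hx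
      · exact Or.inr ⟨p, rfl⟩
      · cases u; exact Or.inl rfl
    · have : (fun i => decide ((inl (i, true) : (Fin n × Bool) ⊕ Unit) ∈
          insert (inr () : (Fin n × Bool) ⊕ Unit)
            ((Finset.univ : Finset (Fin n)).image fun j => inl (j, Z j)))) = Z := by
        funext i
        cases hzi : Z i
        · simp [assign_mem n Z i true, hzi]
        · simp [assign_mem n Z i true, hzi]
      rw [this]; exact hZ
end

section
/- The collection F is a matroid collection: (M1) the empty finset belongs to F; (M2) if X ∈ F and Y ⊆ X then Y ∈ F; (M3) for all X, Y ∈ F with X.card > Y.card there exists x ∈ X \ Y with insert x Y ∈ F. -/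
open Sum

/-- The collection `F` of the Section-4 parameterized construction
(subsets of `Fin n ⊕ Unit` of size at most `k + 1` containing at most `k`
non-indicator symbols) is a matroid collection: (M1), (M2), (M3). -/
theorem matroid_collection_param_F (n k : ℕ)
    (e : Fin n ⊕ Unit) (he : e = inr ())
    (F : Set (Finset (Fin n ⊕ Unit)))
    (hF : F = {X : Finset (Fin n ⊕ Unit) |
      X.card ≤ k + 1 ∧ (X.filter (fun x => x ≠ e)).card ≤ k}) :
    (∅ : Finset (Fin n ⊕ Unit)) ∈ F ∧
    (∀ X ∈ F, ∀ Y : Finset (Fin n ⊕ Unit), Y ⊆ X → Y ∈ F) ∧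
    (∀ X ∈ F, ∀ Y ∈ F, Y.card < X.card →
      ∃ x ∈ X \ Y, insert x Y ∈ F) := by
  subst hF
  refine ⟨⟨by simp, by simp⟩, ?_, ?_⟩
  · intro X hX Y hYX
    exact ⟨le_trans (Finset.card_le_card hYX) hX.1,
      le_trans (Finset.card_le_card (Finset.filter_subset_filter _ hYX)) hX.2⟩
  · intro X hX Y hY hlt
    by_cases heXY : e ∈ X ∧ e ∉ Y
    · refine ⟨e, Finset.mem_sdiff.mpr ⟨heXY.1, heXY.2⟩, ?_, ?_⟩
      · rw [Finset.card_insert_of_notMem heXY.2]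
        have := hX.1; omega
      · rw [Finset.filter_insert]
        simp only [ne_eq, not_true_eq_false, if_false]
        exact hY.2
    · have hflt : (Y.filter (fun x => x ≠ e)).card < k := by
        rcases not_and_or.mp heXY with hX' | hY'
        · -- e ∉ X, so X.filter = X and X.card ≤ k
          have : X.filter (fun x => x ≠ e) = X := by
            apply Finset.filter_true_of_mem
            intro x hx hxe; exact hX' (hxe ▸ hx)
          have hXk : X.card ≤ k := this ▸ hX.2
          calc (Y.filter (fun x => x ≠ e)).card ≤ Y.card :=
                Finset.card_le_card (Finset.filter_subset _ _)
            _ < k := lt_of_lt_of_le hlt hXk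
        · -- e ∈ Y
          push_neg at hY'
          have hfe : Y.filter (fun x => x ≠ e) = Y.erase e := Finset.filter_ne' Y e
          have h1 : (Y.erase e).card = Y.card - 1 := Finset.card_erase_of_mem hY'
          have hYk : Y.card ≤ k := Nat.lt_succ_iff.mp (lt_of_lt_of_le hlt hX.1)
          have hYpos : 0 < Y.card := Finset.card_pos.mpr ⟨e, hY'⟩
          rw [hfe, h1]; omega
      have hns : ¬ X ⊆ Y := fun h => absurd (Finset.card_le_card h) (not_le.mpr hlt)
      obtain ⟨x, hxX, hxY⟩ := Finset.not_subset.mp hns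
      refine ⟨x, Finset.mem_sdiff.mpr ⟨hxX, hxY⟩, ?_, ?_⟩
      · rw [Finset.card_insert_of_notMem hxY]
        have := hX.1; omega
      · rw [Finset.filter_insert]
        by_cases hx : x = e
        · simp [hx]; exact hY.2
        · simp only [ne_eq, hx, not_false_iff, if_true]
          have h2 := Finset.card_insert_le x (Y.filter (fun x => x ≠ e))
          simp only [ne_eq] at h2 hflt ⊢
          omega
end

section
/- The collection G := A ∪ B ∪ C is a greedoid collection: (M1) the empty finset belongs to G, and (M3) for all X, Y ∈ G with X.card > Y.card there exists x ∈ X \ Y with insert x Y ∈ G. -/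
open Sum

/-- The collection `G := A ∪ B ∪ C` of the Section-4 parameterized
construction is a greedoid collection: (M1) `∅ ∈ G`, and (M3). -/
theorem greedoid_collection_param_G (n k : ℕ)
    (φ : (Fin n → Bool) → Prop)
    (e : Fin n ⊕ Unit) (he : e = inr ())
    (A B C G : Set (Finset (Fin n ⊕ Unit)))
    (hA : A = {X : Finset (Fin n ⊕ Unit) | e ∉ X ∧ X.card ≤ k})
    (hB : B = {X : Finset (Fin n ⊕ Unit) |
      e ∈ X ∧ (X.erase e).card = k ∧ φ (fun i => decide (inl i ∈ X))})
    (hC : C = {X : Finset (Fin n ⊕ Unit) | e ∉ X ∧ X.card = k + 1})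
    (hG : G = A ∪ B ∪ C) :
    (∅ : Finset (Fin n ⊕ Unit)) ∈ G ∧
    (∀ X ∈ G, ∀ Y ∈ G, Y.card < X.card →
      ∃ x ∈ X \ Y, insert x Y ∈ G) := by
  subst hA hB hC hG
  constructor
  · exact Or.inl (Or.inl ⟨Finset.notMem_empty _, by simp⟩)
  intro X hX Y hY hlt
  have hXcard : X.card ≤ k + 1 := by
    rcases hX with (hX | hX) | hX
    · exact hX.2.trans (Nat.le_succ k)
    · have h1 := Finset.card_erase_add_one hX.1
      have h2 := hX.2.1
      omega
    · exact hX.2.le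
  -- Y must be in A
  have hYA : e ∉ Y ∧ Y.card ≤ k := by
    rcases hY with (hY | hY) | hY
    · exact hY
    · have h1 := Finset.card_erase_add_one hY.1
      have h2 := hY.2.1
      omega
    · have h2 := hY.2
      omega
  obtain ⟨hYe, hYk⟩ := hYA
  rcases lt_or_eq_of_le hYk with hYlt | hYeq
  · -- Y.card < k : find x ∈ X \ Y with x ≠ e, insert into A
    have hex : ∃ x ∈ X, x ∉ Y ∧ x ≠ e := by
      by_contra hcon
      push_neg at hcon
      have hsub : X ⊆ insert e Y := by
        intro x hx
        by_cases hxe : x = e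
        · simp [hxe]
        · by_cases hxY : x ∈ Y
          · exact Finset.mem_insert_of_mem hxY
          · exact absurd (hcon x hx hxY) hxe
      rcases hX with (hX | hX) | hX
      · have : X ⊆ Y := fun x hx => by
          rcases Finset.mem_insert.1 (hsub hx) with h | h
          · exact absurd (h ▸ hx) hX.1
          · exact h
        exact absurd (Finset.card_le_card this) (by omega)
      · have : X.erase e ⊆ Y := fun x hx => by
          have hxe := Finset.ne_of_mem_erase hx
          rcases Finset.mem_insert.1 (hsub (Finset.mem_of_mem_erase hx)) with h | h
          · exact absurd h hxe
          · exact h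
        have h2 := Finset.card_le_card this
        have h3 := hX.2.1
        omega
      · have : X ⊆ Y := fun x hx => by
          rcases Finset.mem_insert.1 (hsub hx) with h | h
          · exact absurd (h ▸ hx) hX.1
          · exact h
        exact absurd (Finset.card_le_card this) (by omega)
    obtain ⟨x, hxX, hxY, hxe⟩ := hex
    refine ⟨x, Finset.mem_sdiff.2 ⟨hxX, hxY⟩, Or.inl (Or.inl ⟨?_, ?_⟩)⟩
    · simp only [Finset.mem_insert]
      rintro (h | h)
      · exact hxe h.symm
      · exact hYe h
    · rw [Finset.card_insert_of_notMem hxY]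
      omega
  · -- Y.card = k, so X.card = k + 1
    have hXc : X.card = k + 1 := by omega
    rcases hX with (hX | hX) | hX
    · have h2 := hX.2
      omega
    · -- X ∈ B
      have hXek := hX.2.1
      by_cases hsub : X.erase e ⊆ Y
      · have heq : X.erase e = Y :=
          Finset.eq_of_subset_of_card_le hsub (by omega)
        have hXeq : X = insert e Y := by
          rw [← heq, Finset.insert_erase hX.1]
        refine ⟨e, Finset.mem_sdiff.2 ⟨hX.1, hYe⟩, Or.inl (Or.inr ?_)⟩
        rw [← hXeq]
        exact hX
      · obtain ⟨x, hx, hxY⟩ := Finset.not_subset.1 hsub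
        have hxe := Finset.ne_of_mem_erase hx
        refine ⟨x, Finset.mem_sdiff.2 ⟨Finset.mem_of_mem_erase hx, hxY⟩,
          Or.inr ⟨?_, ?_⟩⟩
        · simp only [Finset.mem_insert]
          rintro (h | h)
          · exact hxe h.symm
          · exact hYe h
        · rw [Finset.card_insert_of_notMem hxY]
          omega
    · -- X ∈ C
      have hns : ¬ X ⊆ Y := fun h => absurd (Finset.card_le_card h) (by omega)
      obtain ⟨x, hx, hxY⟩ := Finset.not_subset.1 hns
      refine ⟨x, Finset.mem_sdiff.2 ⟨hx, hxY⟩, Or.inr ⟨?_, ?_⟩⟩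
      · simp only [Finset.mem_insert]
        rintro (h | h)
        · exact hX.1 (h ▸ hx)
        · exact hYe h
      · rw [Finset.card_insert_of_notMem hxY]
        omega
end

section
/- There exists a truth assignment Z of weight k satisfying φ (i.e. ∃ Z, (Finset.univ.filter (fun i => Z i = true)).card = k ∧ φ Z) if and only if there exists a finset X with X ∈ F, X ∈ G and X.card = k + 1. -/
open Sum

/-- There is a weight-`k` satisfying assignment of `φ` iff the
intersection `F ∩ G` of the Section-4 parameterized construction contains a set of
size `k + 1`. -/
theorem weight_k_sat_iff_intersection (n k : ℕ)
    (φ : (Fin n → Bool) → Prop)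
    (e : Fin n ⊕ Unit) (he : e = inr ())
    (F A B C G : Set (Finset (Fin n ⊕ Unit)))
    (hF : F = {X : Finset (Fin n ⊕ Unit) |
      X.card ≤ k + 1 ∧ (X.filter (fun x => x ≠ e)).card ≤ k})
    (hA : A = {X : Finset (Fin n ⊕ Unit) | e ∉ X ∧ X.card ≤ k})
    (hB : B = {X : Finset (Fin n ⊕ Unit) |
      e ∈ X ∧ (X.erase e).card = k ∧ φ (fun i => decide (inl i ∈ X))})
    (hC : C = {X : Finset (Fin n ⊕ Unit) | e ∉ X ∧ X.card = k + 1})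
    (hG : G = A ∪ B ∪ C) :
    (∃ Z : Fin n → Bool,
        (Finset.univ.filter (fun i => Z i = true)).card = k ∧ φ Z) ↔
      ∃ X : Finset (Fin n ⊕ Unit), X ∈ F ∧ X ∈ G ∧ X.card = k + 1 := by
  subst he hF hA hB hC hG
  constructor
  · rintro ⟨Z, hZ, hφ⟩
    set S : Finset (Fin n ⊕ Unit) :=
      (Finset.univ.filter (fun i => Z i = true)).image inl with hS
    set X := insert (inr () : Fin n ⊕ Unit) S with hX
    have heS : (inr () : Fin n ⊕ Unit) ∉ S := by simp [hS]
    have hScard : S.card = k := by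
      rw [hS, Finset.card_image_of_injective _ Sum.inl_injective]; exact hZ
    have hXcard : X.card = k + 1 := by
      rw [hX, Finset.card_insert_of_notMem heS, hScard]
    have hfilter : X.filter (fun x => x ≠ inr ()) = S := by
      ext x
      cases x with
      | inl i => simp [hX, hS]
      | inr u => cases u; simp [hX, hS]
    refine ⟨X, ⟨le_of_eq hXcard, by rw [hfilter, hScard]⟩, Or.inl (Or.inr ?_), hXcard⟩
    refine ⟨by simp [hX], ?_, ?_⟩
    · rw [hX, Finset.erase_insert heS, hScard]
    · have : (fun i => decide (inl i ∈ X)) = Z := by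
        funext i
        simp only [hX, hS, Finset.mem_insert, Finset.mem_image, Finset.mem_filter,
          Finset.mem_univ, true_and]
        by_cases h : Z i = true <;> simp [h]
      rw [this]; exact hφ
  · rintro ⟨X, ⟨hc1, hf⟩, hG, hXcard⟩
    rcases hG with (hA' | hB') | hC'
    · exact absurd hXcard (by have := hA'.2; omega)
    · obtain ⟨heX, herase, hφ⟩ := hB'
      refine ⟨fun i => decide (inl i ∈ X), ?_, hφ⟩
      have h1 : X.erase (inr ()) = (Finset.univ.filter (fun i => inl i ∈ X)).image inl := by
        ext x
        cases x with
        | inl i => simp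
        | inr u => cases u; simp
      rw [h1, Finset.card_image_of_injective _ Sum.inl_injective] at herase
      simpa using herase
    · exfalso
      have : X.filter (fun x => x ≠ inr ()) = X :=
        Finset.filter_true_of_mem (fun x hx => fun h => hC'.1 (h ▸ hx))
      rw [this, hC'.2] at hf
      omega
end

section
/- The collection G := A' ∪ A ∪ B ∪ C is a greedoid collection: (M1) the empty finset belongs to G, and (M3) for all X, Y ∈ G with X.card > Y.card there exists x ∈ X \ Y with insert x Y ∈ G. -/
open Sum

/-- The collection `G := A' ∪ A ∪ B ∪ C` of the dual parameterized
construction is a greedoid collection: (M1) `∅ ∈ G`, and (M3). -/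
theorem greedoid_collection_dual_G (n k m : ℕ) (hkn : k ≤ n)
    (φ : (Fin n → Bool) → Prop)
    (e : Fin n ⊕ (Unit ⊕ Fin m)) (he : e = inr (inl ()))
    (D : Finset (Fin n ⊕ (Unit ⊕ Fin m)))
    (hD : D = (Finset.univ : Finset (Fin m)).image (fun j => inr (inr j)))
    (A' A B C G : Set (Finset (Fin n ⊕ (Unit ⊕ Fin m))))
    (hA' : A' = {X : Finset (Fin n ⊕ (Unit ⊕ Fin m)) | X ⊆ D})
    (hA : A = {X : Finset (Fin n ⊕ (Unit ⊕ Fin m)) |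
      D ⊆ X ∧ (∀ x ∈ X, x ∈ D ∨ ∃ i : Fin n, x = inl i) ∧
      m + 1 ≤ X.card ∧ X.card ≤ m + (n - k)})
    (hB : B = {X : Finset (Fin n ⊕ (Unit ⊕ Fin m)) |
      ∃ Y : Finset (Fin n ⊕ (Unit ⊕ Fin m)),
        (∀ x ∈ Y, ∃ i : Fin n, x = inl i) ∧ Y.card = n - k ∧
        φ (fun i => decide (inl i ∉ Y)) ∧ X = D ∪ {e} ∪ Y})
    (hC : C = {X : Finset (Fin n ⊕ (Unit ⊕ Fin m)) |
      ∃ Y : Finset (Fin n ⊕ (Unit ⊕ Fin m)),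
        (∀ x ∈ Y, ∃ i : Fin n, x = inl i) ∧ Y.card = n - k + 1 ∧
        X = D ∪ Y})
    (hG : G = A' ∪ A ∪ B ∪ C) :
    (∅ : Finset (Fin n ⊕ (Unit ⊕ Fin m))) ∈ G ∧
    (∀ X ∈ G, ∀ Y ∈ G, Y.card < X.card →
      ∃ x ∈ X \ Y, insert x Y ∈ G) := by
  subst hG
  -- basic facts
  have hDcard : D.card = m := by
    rw [hD, Finset.card_image_of_injective _ fun a b h => by simpa using h]
    simp
  have hinlD : ∀ i : Fin n, (inl i : Fin n ⊕ (Unit ⊕ Fin m)) ∉ D := by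
    intro i hi
    rw [hD] at hi
    simp at hi
  have heD : e ∉ D := by
    rw [hD, he]; simp
  have heV : ¬ ∃ i : Fin n, e = inl i := by
    rw [he]; simp
  -- cardinality of unions
  have hcardU : ∀ Z : Finset (Fin n ⊕ (Unit ⊕ Fin m)),
      (∀ x ∈ Z, ∃ i : Fin n, x = inl i) → (D ∪ Z).card = m + Z.card := by
    intro Z hZ
    have d : Disjoint D Z := by
      rw [Finset.disjoint_left]
      rintro a ha hae
      obtain ⟨i, rfl⟩ := hZ a hae
      exact hinlD i ha
    rw [Finset.card_union_of_disjoint d, hDcard]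
  have hcardB : ∀ Z : Finset (Fin n ⊕ (Unit ⊕ Fin m)),
      (∀ x ∈ Z, ∃ i : Fin n, x = inl i) → (D ∪ {e} ∪ Z).card = m + 1 + Z.card := by
    intro Z hZ
    have d1 : Disjoint D ({e} : Finset (Fin n ⊕ (Unit ⊕ Fin m))) := by
      rw [Finset.disjoint_singleton_right]; exact heD
    have d2 : Disjoint (D ∪ {e}) Z := by
      rw [Finset.disjoint_left]
      rintro a ha hae
      obtain ⟨i, rfl⟩ := hZ a hae
      rcases Finset.mem_union.1 ha with h | h
      · exact hinlD i h
      · exact heV ⟨i, (Finset.mem_singleton.1 h).symm⟩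
    rw [Finset.card_union_of_disjoint d2, Finset.card_union_of_disjoint d1, hDcard,
      Finset.card_singleton]
  -- maximal cardinality in G
  have hmax : ∀ Z, Z ∈ A' ∪ A ∪ B ∪ C → Z.card ≤ m + (n - k) + 1 := by
    rintro Z (((hZ | hZ) | hZ) | hZ)
    · rw [hA'] at hZ
      have := Finset.card_le_card hZ
      omega
    · rw [hA] at hZ
      obtain ⟨-, -, -, h⟩ := hZ
      omega
    · rw [hB] at hZ
      obtain ⟨Yb, hv, hc, -, rfl⟩ := hZ
      rw [hcardB Yb hv]
      omega
    · rw [hC] at hZ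
      obtain ⟨Yc, hv, hc, rfl⟩ := hZ
      rw [hcardU Yc hv]
      omega
  -- key step: inserting a variable element into a set of A-type (or D itself)
  have key : ∀ W : Finset (Fin n ⊕ (Unit ⊕ Fin m)), D ⊆ W →
      (∀ z ∈ W, z ∈ D ∨ ∃ i : Fin n, z = inl i) →
      m ≤ W.card → W.card ≤ m + (n - k) →
      ∀ x : Fin n ⊕ (Unit ⊕ Fin m), (∃ i : Fin n, x = inl i) →
      x ∉ W → insert x W ∈ A' ∪ A ∪ B ∪ C := by
    intro W hDW hWel hW1 hW2 x hxv hxW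
    have hcard : (insert x W).card = W.card + 1 := Finset.card_insert_of_notMem hxW
    rcases lt_or_eq_of_le hW2 with hlt | heq
    · refine Or.inl (Or.inl (Or.inr ?_))
      rw [hA]
      refine ⟨hDW.trans (Finset.subset_insert _ _), ?_, by omega, by omega⟩
      intro z hz
      rcases Finset.mem_insert.1 hz with rfl | hz
      · exact Or.inr hxv
      · exact hWel z hz
    · refine Or.inr ?_
      rw [hC]
      refine ⟨insert x (W \ D), ?_, ?_, ?_⟩
      · intro z hz
        rcases Finset.mem_insert.1 hz with rfl | hz
        · exact hxv
        · have hz' := Finset.mem_sdiff.1 hz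
          exact (hWel z hz'.1).resolve_left hz'.2
      · have hxWD : x ∉ W \ D := fun h => hxW (Finset.mem_sdiff.1 h).1
        rw [Finset.card_insert_of_notMem hxWD, Finset.card_sdiff_of_subset hDW, hDcard]
        omega
      · rw [Finset.union_insert, Finset.union_sdiff_of_subset hDW]
  -- X is comparable with D
  refine ⟨Or.inl (Or.inl (Or.inl (by rw [hA']; exact Finset.empty_subset D))), ?_⟩
  intro X hX Y hY hlt
  have hsub : X ⊆ D ∨ D ⊆ X := by
    rcases hX with (((h | h) | h) | h)
    · rw [hA'] at h; exact Or.inl h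
    · rw [hA] at h; exact Or.inr h.1
    · rw [hB] at h
      obtain ⟨Yb, -, -, -, rfl⟩ := h
      exact Or.inr (Finset.subset_union_left.trans Finset.subset_union_left)
    · rw [hC] at h
      obtain ⟨Yc, -, -, rfl⟩ := h
      exact Or.inr Finset.subset_union_left
  have hexists : ∃ x ∈ X, x ∉ Y := by
    rw [← Finset.not_subset]
    intro h
    exact absurd (Finset.card_le_card h) (by omega)
  rcases hY with (((hY | hY) | hY) | hY)
  · -- Y ∈ A'
    rw [hA'] at hY
    have hYm : Y.card ≤ m := by have := Finset.card_le_card hY; omega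
    by_cases hYD : Y.card = m
    · -- Y = D
      have hYDeq : Y = D := Finset.eq_of_subset_of_card_le hY (by omega)
      subst hYDeq
      rcases hX with (((hX | hX) | hX) | hX)
      · exfalso
        rw [hA'] at hX
        have := Finset.card_le_card hX
        omega
      · rw [hA] at hX
        obtain ⟨hDX, hXel, hc1, hc2⟩ := hX
        obtain ⟨x, hxX, hxY⟩ := hexists
        have hxv : ∃ i : Fin n, x = inl i := (hXel x hxX).resolve_left hxY
        exact ⟨x, Finset.mem_sdiff.2 ⟨hxX, hxY⟩,
          key Y (Finset.Subset.refl Y) (fun z hz => Or.inl hz) (by omega) (by omega) x hxv hxY⟩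
      · rw [hB] at hX
        obtain ⟨Yb, hv, hc, hφ, rfl⟩ := hX
        rcases Yb.eq_empty_or_nonempty with rfl | ⟨x, hx⟩
        · refine ⟨e, Finset.mem_sdiff.2 ⟨by simp, heD⟩, Or.inl (Or.inr ?_)⟩
          rw [hB]
          refine ⟨∅, by simp, by simpa using hc, hφ, ?_⟩
          ext z
          simp
        · have hxv := hv x hx
          have hxD : x ∉ Y := by
            obtain ⟨i, rfl⟩ := hxv
            exact hinlD i
          refine ⟨x, Finset.mem_sdiff.2 ⟨Finset.mem_union_right _ hx, hxD⟩,
            key Y (Finset.Subset.refl Y) (fun z hz => Or.inl hz) (by omega) (by omega) x hxv hxD⟩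
      · rw [hC] at hX
        obtain ⟨Yc, hv, hc, rfl⟩ := hX
        obtain ⟨x, hx⟩ := Finset.card_pos.1 (show 0 < Yc.card by omega)
        have hxv := hv x hx
        have hxD : x ∉ Y := by
          obtain ⟨i, rfl⟩ := hxv
          exact hinlD i
        refine ⟨x, Finset.mem_sdiff.2 ⟨Finset.mem_union_right _ hx, hxD⟩,
          key Y (Finset.Subset.refl Y) (fun z hz => Or.inl hz) (by omega) (by omega) x hxv hxD⟩
    · -- Y ⊊ D
      rcases hsub with hXD | hDX
      · obtain ⟨x, hxX, hxY⟩ := hexists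
        exact ⟨x, Finset.mem_sdiff.2 ⟨hxX, hxY⟩,
          Or.inl (Or.inl (Or.inl (by rw [hA']; exact Finset.insert_subset (hXD hxX) hY)))⟩
      · have hnDY : ¬ D ⊆ Y := by
          intro h
          exact absurd (Finset.card_le_card h) (by omega)
        obtain ⟨d, hdD, hdY⟩ := Finset.not_subset.1 hnDY
        exact ⟨d, Finset.mem_sdiff.2 ⟨hDX hdD, hdY⟩,
          Or.inl (Or.inl (Or.inl (by rw [hA']; exact Finset.insert_subset hdD hY)))⟩
  · -- Y ∈ A
    rw [hA] at hY
    obtain ⟨hDY, hYel, hc1, hc2⟩ := hY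
    have heY : e ∉ Y := fun h => by
      rcases hYel e h with h' | h'
      · exact heD h'
      · exact heV h'
    rcases hX with (((hX | hX) | hX) | hX)
    · exfalso
      rw [hA'] at hX
      have := Finset.card_le_card hX
      omega
    · rw [hA] at hX
      obtain ⟨hDX, hXel, -, -⟩ := hX
      obtain ⟨x, hxX, hxY⟩ := hexists
      have hxv : ∃ i : Fin n, x = inl i := (hXel x hxX).resolve_left fun h => hxY (hDY h)
      exact ⟨x, Finset.mem_sdiff.2 ⟨hxX, hxY⟩, key Y hDY hYel (by omega) hc2 x hxv hxY⟩
    · rw [hB] at hX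
      obtain ⟨Yb, hv, hcB, hφ, rfl⟩ := hX
      by_cases hBY : Yb ⊆ Y
      · -- insert e
        have hYbsub : Yb ⊆ Y \ D := by
          intro z hz
          refine Finset.mem_sdiff.2 ⟨hBY hz, ?_⟩
          obtain ⟨i, rfl⟩ := hv z hz
          exact hinlD i
        have hYv : Y \ D = Yb := by
          refine (Finset.eq_of_subset_of_card_le hYbsub ?_).symm
          rw [Finset.card_sdiff_of_subset hDY, hDcard, hcB]
          omega
        have hYeq : Y = D ∪ Yb := by rw [← hYv, Finset.union_sdiff_of_subset hDY]
        have hins : insert e Y = D ∪ {e} ∪ Yb := by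
          rw [hYeq]; ext z; simp
        refine ⟨e, Finset.mem_sdiff.2 ⟨by simp, heY⟩, Or.inl (Or.inr ?_)⟩
        rw [hB, hins]
        exact ⟨Yb, hv, hcB, hφ, rfl⟩
      · obtain ⟨x, hxB, hxY⟩ := Finset.not_subset.1 hBY
        exact ⟨x, Finset.mem_sdiff.2 ⟨Finset.mem_union_right _ hxB, hxY⟩,
          key Y hDY hYel (by omega) hc2 x (hv x hxB) hxY⟩
    · rw [hC] at hX
      obtain ⟨Yc, hv, hcC, rfl⟩ := hX
      obtain ⟨x, hxX, hxY⟩ := hexists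
      have hxv : ∃ i : Fin n, x = inl i := by
        rcases Finset.mem_union.1 hxX with h | h
        · exact absurd (hDY h) hxY
        · exact hv x h
      exact ⟨x, Finset.mem_sdiff.2 ⟨hxX, hxY⟩, key Y hDY hYel (by omega) hc2 x hxv hxY⟩
  · -- Y ∈ B : impossible, Y has maximal cardinality
    exfalso
    rw [hB] at hY
    obtain ⟨Yb, hv, hc, -, rfl⟩ := hY
    have := hmax X hX
    rw [hcardB Yb hv] at hlt
    omega
  · -- Y ∈ C : impossible, Y has maximal cardinality
    exfalso
    rw [hC] at hY
    obtain ⟨Yc, hv, hc, rfl⟩ := hY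
    have := hmax X hX
    rw [hcardU Yc hv] at hlt
    omega
end
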